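/- Fix positive integers m, n, p, a real δ ∈ (0,1), vectors L, U ∈ ℝ^p with nonnegative entries, a utility vector w ∈ ℝ^m with w_i ≥ 0, and a matrix q ∈ [0,1]^{m×p} whose rows sum to 1. Let g : {1,…,m} → {1,…,p} be a random group assignment with independent labels and Pr[g(i) = ℓ] = q_{iℓ}. Let P := {x ∈ [0,1]^m : ∑_i x_i = n, and for all ℓ, L_ℓ − δn ≤ ∑_i q_{iℓ} x_i ≤ U_ℓ + δn}, suppose x ∈ P maximizes y ↦ ∑_i w_i y_i over P and has at most p fractional coordinates, and set x'_i := ⌈x_i⌉ ∈ {0,1}. Then n ≤ ∑_i x'_i ≤ n + p, and for every fixed x* ∈ {0,1}^m with ∑_i x*_i = n, with probability at least 1 − 4p·exp(−δ²n/3) over g, the following both hold: (i) if for all ℓ, L_ℓ ≤ #{i : x*_i = 1 and g(i) = ℓ} ≤ U_ℓ, then ∑_i w_i x'_i ≥ ∑_i w_i x*_i; and (ii) for all ℓ, L_ℓ − (p + 2δn) ≤ #{i : x'_i = 1 and g(i) = ℓ} ≤ U_ℓ + (p + 2δn). -/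

import Mathlib

/-!
Rounding up sets to `1` exactly the coordinates where `x` is `1` or fractional, and there are
at most `p` fractional ones; this gives the cardinality bounds and changes any group count by at
most `p`. The randomness only matters through two fixed index sets of size at most `n`: the
support of `x*` and the set of coordinates where `x = 1`. By Hoeffding's inequality the number of
members of group `ℓ` in either set differs from its mean `∑ q_{iℓ}` by `δn` or more with
probability at most `2 exp (-2δ²n) ≤ 2 exp (-δ²n/3)`, so a union bound over the `2p` such events
leaves an event of probability at least `1 - 4p exp (-δ²n/3)` on which neither happens. There, a
fair `x*` satisfies the denoised constraints, so its value is at most that of the optimum `x`,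
hence of `⌈x⌉`; and each group count of `⌈x⌉` is within `δn` (concentration) plus `δn` (slack of
the denoised constraints) plus `p` (fractional coordinates) of the target bounds.
-/

open MeasureTheory ProbabilityTheory Finset Real
open scoped NNReal

lemma ProbabilityTheory.HasSubgaussianMGF.mono {Ω : Type*} [MeasurableSpace Ω] {μ : Measure Ω}
    {X : Ω → ℝ} {c c' : ℝ≥0} (h : HasSubgaussianMGF X c μ) (hc : c ≤ c') :
    HasSubgaussianMGF X c' μ where
  integrable_exp_mul := h.integrable_exp_mul
  mgf_le t := (h.mgf_le t).trans (by gcongr)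

section Hoeffding

variable {ι κ : Type*} [Fintype ι] [MeasurableSpace κ] {ν : ι → Measure κ}
  [∀ i, IsProbabilityMeasure (ν i)]

lemma hasSubgaussianMGF_sum_pi {f : ι → κ → ℝ} (hf : ∀ i, Measurable (f i))
    (hf01 : ∀ i k, f i k ∈ Set.Icc 0 1) (s : Finset ι) :
    HasSubgaussianMGF (fun g ↦ ∑ i ∈ s, (f i (g i) - ∫ k, f i k ∂ν i)) (#s / 4)
      (Measure.pi ν) := by
  have hmean (i : ι) : (Measure.pi ν)[fun g ↦ f i (g i)] = ∫ k, f i k ∂ν i :=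
    integral_comp_eval (hf i).aestronglyMeasurable
  have hindep : iIndepFun (fun i g ↦ f i (g i) - ∫ k, f i k ∂ν i) (Measure.pi ν) :=
    iIndepFun_pi fun i ↦ ((hf i).sub_const _).aemeasurable
  have hsub (i : ι) : HasSubgaussianMGF (fun g ↦ f i (g i) - ∫ k, f i k ∂ν i) (1 / 4)
      (Measure.pi ν) := by
    have := hasSubgaussianMGF_of_mem_Icc (μ := Measure.pi ν) (X := fun g ↦ f i (g i))
      ((hf i).comp (measurable_pi_apply i)).aemeasurable (ae_of_all _ fun g ↦ hf01 i (g i))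
    rw [hmean] at this
    convert this using 1
    norm_num
  convert HasSubgaussianMGF.sum_of_iIndepFun hindep (fun i _ ↦ hsub i) using 1
  simp [div_eq_mul_inv]

lemma measureReal_le_abs_sum_pi_sub_integral_le {f : ι → κ → ℝ} (hf : ∀ i, Measurable (f i))
    (hf01 : ∀ i k, f i k ∈ Set.Icc 0 1) {s : Finset ι} {N : ℕ} (hN : #s ≤ N) {ε : ℝ}
    (hε : 0 ≤ ε) :
    (Measure.pi ν).real {g | ε ≤ |∑ i ∈ s, (f i (g i) - ∫ k, f i k ∂ν i)|} ≤
      2 * exp (-2 * ε ^ 2 / N) := by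
  have hX := (hasSubgaussianMGF_sum_pi (ν := ν) hf hf01 s).mono
    (c' := N / 4) (by gcongr)
  have htail : exp (-ε ^ 2 / (2 * ((N : ℝ≥0) / 4 : ℝ≥0))) = exp (-2 * ε ^ 2 / N) := by
    push_cast; ring_nf
  calc (Measure.pi ν).real {g | ε ≤ |∑ i ∈ s, (f i (g i) - ∫ k, f i k ∂ν i)|}
      ≤ (Measure.pi ν).real
          ({g | ε ≤ ∑ i ∈ s, (f i (g i) - ∫ k, f i k ∂ν i)} ∪
            {g | ε ≤ (-fun g ↦ ∑ i ∈ s, (f i (g i) - ∫ k, f i k ∂ν i)) g}) :=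
        measureReal_mono fun g (hg : ε ≤ |_|) ↦ le_abs.mp hg
    _ ≤ _ := measureReal_union_le _ _
    _ ≤ 2 * exp (-2 * ε ^ 2 / N) := by
        rw [two_mul, ← htail]
        exact add_le_add (hX.measure_ge_le hε) (hX.neg.measure_ge_le hε)

lemma measureReal_le_abs_card_filter_sub_le [DecidableEq κ] [MeasurableSingletonClass κ]
    (s : Finset ι) (ℓ : κ) {N : ℕ} (hN : #s ≤ N) {ε : ℝ} (hε : 0 ≤ ε) :
    (Measure.pi ν).real {g | ε ≤ |(#{i ∈ s | g i = ℓ} : ℝ) - ∑ i ∈ s, (ν i).real {ℓ}|} ≤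
      2 * exp (-2 * ε ^ 2 / N) := by
  convert measureReal_le_abs_sum_pi_sub_integral_le (ν := ν) (f := fun _ ↦ Set.indicator {ℓ} 1)
    (fun _ ↦ measurable_one.indicator (measurableSet_singleton ℓ))
    (fun _ k ↦ ⟨Set.indicator_nonneg (fun _ _ ↦ zero_le_one) k,
      Set.indicator_le_self' (fun _ _ ↦ zero_le_one) k⟩) hN hε using 5 with g
  simp only [integral_indicator_one (measurableSet_singleton ℓ)]
  simp [sum_sub_distrib, Set.indicator_apply]

def IsConcentrated [DecidableEq κ] (q : ι → κ → ℝ) (ε : ℝ) (s : Finset ι) (g : ι → κ) : Prop :=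
  ∀ ℓ, |(#{i ∈ s | g i = ℓ} : ℝ) - ∑ i ∈ s, q i ℓ| < ε

lemma measureReal_not_isConcentrated_le [Fintype κ] [DecidableEq κ] [MeasurableSingletonClass κ]
    {q : ι → κ → ℝ} (hq : ∀ i ℓ, (ν i).real {ℓ} = q i ℓ) (s : Finset ι) {N : ℕ} (hN : #s ≤ N)
    {δ : ℝ} (hδ : 0 ≤ δ) :
    (Measure.pi ν).real {g | ¬ IsConcentrated q (δ * N) s g} ≤
      Fintype.card κ * (2 * exp (-2 * δ ^ 2 * N)) := by
  simp only [IsConcentrated, not_forall, not_lt, ← hq, Set.ofPred_exists]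
  refine (measureReal_iUnion_fintype_le _).trans ((sum_le_sum fun ℓ _ ↦
    measureReal_le_abs_card_filter_sub_le s ℓ hN (by positivity : 0 ≤ δ * N)).trans_eq ?_)
  rcases N.eq_zero_or_pos with rfl | hN
  · simp
  · rw [sum_const, card_univ, nsmul_eq_mul]
    field_simp

end Hoeffding

section Rounding

variable {ι κ : Type*} [Fintype ι]

noncomputable def oneCoords (x : ι → ℝ) : Finset ι := {i | x i = 1}

noncomputable def fractionalCoords (x : ι → ℝ) : Finset ι := {i | 0 < x i ∧ x i < 1}

lemma disjoint_oneCoords_fractionalCoords (x : ι → ℝ) :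
    Disjoint (oneCoords x) (fractionalCoords x) := by
  simp only [oneCoords, fractionalCoords, disjoint_filter]
  intro i _ h1 h2
  exact h2.2.ne h1

lemma eq_zero_or_eq_one_or_mem_Ioo {t : ℝ} (ht : 0 ≤ t ∧ t ≤ 1) :
    t = 0 ∨ t = 1 ∨ (0 < t ∧ t < 1) := by
  rcases ht.1.eq_or_lt with h0 | h0
  · exact .inl h0.symm
  rcases ht.2.lt_or_eq with h1 | h1
  · exact .inr (.inr ⟨h0, h1⟩)
  · exact .inr (.inl h1)

lemma sum_mul_eq_sum_oneCoords_add {x : ι → ℝ} (hx : ∀ i, 0 ≤ x i ∧ x i ≤ 1) (c : ι → ℝ) :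
    ∑ i, c i * x i = ∑ i ∈ oneCoords x, c i + ∑ i ∈ fractionalCoords x, c i * x i := by
  simp only [oneCoords, fractionalCoords, sum_filter, ← sum_add_distrib]
  refine sum_congr rfl fun i _ ↦ ?_
  rcases eq_zero_or_eq_one_or_mem_Ioo (hx i) with h | h | h
  · simp [h]
  · simp [h]
  · simp [h, h.2.ne]

lemma sum_mul_eq_sum_oneCoords {y : ι → ℝ} (hy : ∀ i, y i = 0 ∨ y i = 1) (c : ι → ℝ) :
    ∑ i, c i * y i = ∑ i ∈ oneCoords y, c i := by
  have hfrac : fractionalCoords y = ∅ := by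
    ext i; rcases hy i with h | h <;> simp [fractionalCoords, h]
  rw [sum_mul_eq_sum_oneCoords_add (fun i ↦ by rcases hy i with h | h <;> simp [h]), hfrac,
    sum_empty, add_zero]

lemma ceil_le_add_ite {t : ℝ} (ht : 0 ≤ t ∧ t ≤ 1) :
    (⌈t⌉ : ℝ) ≤ t + if 0 < t ∧ t < 1 then 1 else 0 := by
  rcases eq_zero_or_eq_one_or_mem_Ioo ht with rfl | rfl | h
  · simp
  · simp
  · simpa [h] using (Int.ceil_lt_add_one t).le

lemma sum_ceil_le {x : ι → ℝ} (hx : ∀ i, 0 ≤ x i ∧ x i ≤ 1) :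
    ∑ i, (⌈x i⌉ : ℝ) ≤ ∑ i, x i + #(fractionalCoords x) := by
  calc ∑ i, (⌈x i⌉ : ℝ) ≤ ∑ i, (x i + if 0 < x i ∧ x i < 1 then 1 else 0) :=
        sum_le_sum fun i _ ↦ ceil_le_add_ite (hx i)
    _ = ∑ i, x i + #(fractionalCoords x) := by
        rw [sum_add_distrib, sum_boole, fractionalCoords]

lemma oneCoords_ceil [DecidableEq ι] {x : ι → ℝ} (hx : ∀ i, 0 ≤ x i ∧ x i ≤ 1) :
    oneCoords (fun i ↦ (⌈x i⌉ : ℝ)) = oneCoords x ∪ fractionalCoords x := by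
  ext i
  rcases eq_zero_or_eq_one_or_mem_Ioo (hx i) with h | h | h
  · simp [oneCoords, fractionalCoords, h]
  · simp [oneCoords, fractionalCoords, h]
  · simp [oneCoords, fractionalCoords, h, h.2.ne, Int.ceil_eq_iff, h.2.le]

lemma card_oneCoords_eq_sum {y : ι → ℝ} (hy : ∀ i, y i = 0 ∨ y i = 1) :
    (#(oneCoords y) : ℝ) = ∑ i, y i := by
  simpa using (sum_mul_eq_sum_oneCoords hy 1).symm

lemma card_oneCoords_le_sum {x : ι → ℝ} (hx : ∀ i, 0 ≤ x i ∧ x i ≤ 1) :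
    (#(oneCoords x) : ℝ) ≤ ∑ i, x i := by
  have := sum_mul_eq_sum_oneCoords_add hx 1
  simp only [Pi.one_apply, one_mul, sum_const, nsmul_one] at this
  linarith [sum_nonneg fun i (_ : i ∈ fractionalCoords x) ↦ (hx i).1]

lemma ncard_setOf_eq_one_and_eq [DecidableEq κ] (y : ι → ℝ) (g : ι → κ) (ℓ : κ) :
    ({i | y i = 1 ∧ g i = ℓ} : Set ι).ncard = #{i ∈ oneCoords y | g i = ℓ} := by
  rw [← Set.ncard_coe_finset]
  congr 1
  ext i
  simp [oneCoords]

end Rounding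

lemma ofReal_one_sub_add_le_measure_inter {Ω : Type*} [MeasurableSpace Ω] {μ : Measure Ω}
    [IsProbabilityMeasure μ] {s t : Set Ω} (hs : MeasurableSet s) (ht : MeasurableSet t)
    {a b : ℝ} (ha : μ.real sᶜ ≤ a) (hb : μ.real tᶜ ≤ b) :
    ENNReal.ofReal (1 - (a + b)) ≤ μ (s ∩ t) := by
  refine ENNReal.ofReal_le_of_le_toReal ?_
  have hunion : μ.real (s ∩ t)ᶜ ≤ μ.real sᶜ + μ.real tᶜ := by
    rw [Set.compl_inter]
    exact measureReal_union_le _ _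
  rw [probReal_compl_eq_one_sub (hs.inter ht)] at hunion
  rw [← measureReal_def]
  linarith

section DenoisedLP

variable {ι κ : Type*} [Fintype ι]

def denoisedPolytope (n : ℕ) (δ : ℝ) (L U : κ → ℝ) (q : ι → κ → ℝ) : Set (ι → ℝ) :=
  {x | (∀ i, 0 ≤ x i ∧ x i ≤ 1) ∧ (∑ i, x i = (n : ℝ)) ∧
    ∀ ℓ, L ℓ - δ * n ≤ ∑ i, q i ℓ * x i ∧ ∑ i, q i ℓ * x i ≤ U ℓ + δ * n}

variable {n : ℕ} {δ : ℝ} {L U : κ → ℝ} {q : ι → κ → ℝ}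

lemma sum_ceil_mem_Icc {p : ℕ} {x : ι → ℝ} (hx : x ∈ denoisedPolytope n δ L U q)
    (hfrac : #(fractionalCoords x) ≤ p) :
    (n : ℝ) ≤ ∑ i, (⌈x i⌉ : ℝ) ∧ ∑ i, (⌈x i⌉ : ℝ) ≤ n + p := by
  obtain ⟨hx01, hxsum, -⟩ := hx
  have hceil := sum_ceil_le hx01
  have hfrac' : (#(fractionalCoords x) : ℝ) ≤ p := by exact_mod_cast hfrac
  exact ⟨hxsum ▸ sum_le_sum fun i _ ↦ Int.le_ceil _, by linarith⟩

lemma mem_denoisedPolytope_of_isConcentrated [DecidableEq κ] {y : ι → ℝ}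
    (hy : ∀ i, y i = 0 ∨ y i = 1) (hysum : ∑ i, y i = n) {g : ι → κ}
    (hconc : IsConcentrated q (δ * n) (oneCoords y) g)
    (hfair : ∀ ℓ, L ℓ ≤ (({i | y i = 1 ∧ g i = ℓ} : Set ι).ncard : ℝ) ∧
      (({i | y i = 1 ∧ g i = ℓ} : Set ι).ncard : ℝ) ≤ U ℓ) :
    y ∈ denoisedPolytope n δ L U q := by
  refine ⟨fun i ↦ by rcases hy i with h | h <;> simp [h], hysum, fun ℓ ↦ ?_⟩
  have hc := abs_lt.mp (hconc ℓ)
  have hf := hfair ℓ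
  rw [ncard_setOf_eq_one_and_eq] at hf
  rw [sum_mul_eq_sum_oneCoords hy (q · ℓ)]
  constructor <;> linarith

lemma ncard_ceil_mem_Icc [DecidableEq ι] [DecidableEq κ] {p : ℕ}
    (hq : ∀ i ℓ, q i ℓ ∈ Set.Icc 0 1) {x : ι → ℝ} (hx : x ∈ denoisedPolytope n δ L U q)
    (hfrac : #(fractionalCoords x) ≤ p)
    {g : ι → κ} (hconc : IsConcentrated q (δ * n) (oneCoords x) g) (ℓ : κ) :
    L ℓ - (p + 2 * δ * n) ≤ (({i | (⌈x i⌉ : ℝ) = 1 ∧ g i = ℓ} : Set ι).ncard : ℝ) ∧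
      (({i | (⌈x i⌉ : ℝ) = 1 ∧ g i = ℓ} : Set ι).ncard : ℝ) ≤ U ℓ + (p + 2 * δ * n) := by
  obtain ⟨hx01, -, hxfair⟩ := hx
  rw [ncard_setOf_eq_one_and_eq (fun i ↦ (⌈x i⌉ : ℝ)), oneCoords_ceil hx01, filter_union,
    card_union_of_disjoint (disjoint_filter_filter (disjoint_oneCoords_fractionalCoords x))]
  have hcountF : #{i ∈ fractionalCoords x | g i = ℓ} ≤ p := (card_filter_le _ _).trans hfrac
  have hsplit := sum_mul_eq_sum_oneCoords_add hx01 (q · ℓ)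
  have hF0 : 0 ≤ ∑ i ∈ fractionalCoords x, q i ℓ * x i :=
    sum_nonneg fun i _ ↦ mul_nonneg (hq i ℓ).1 (hx01 i).1
  have hFp : ∑ i ∈ fractionalCoords x, q i ℓ * x i ≤ p := by
    calc ∑ i ∈ fractionalCoords x, q i ℓ * x i ≤ ∑ i ∈ fractionalCoords x, (1 : ℝ) :=
          sum_le_sum fun i _ ↦ mul_le_one₀ (hq i ℓ).2 (hx01 i).1 (hx01 i).2
      _ ≤ p := by simpa using (Nat.cast_le (α := ℝ)).mpr hfrac
  have hc := abs_lt.mp (hconc ℓ)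
  have hfair := hxfair ℓ
  push_cast
  constructor <;> linarith [(Nat.cast_le (α := ℝ)).mpr hcountF]

end DenoisedLP

theorem stmt8_general (m n p : ℕ)
    (δ : ℝ) (hδ : δ ∈ Set.Ioo (0 : ℝ) 1)
    (L U : Fin p → ℝ)
    (w : Fin m → ℝ) (hw : ∀ i, 0 ≤ w i)
    (q : Fin m → Fin p → ℝ) (hq : ∀ i ℓ, q i ℓ ∈ Set.Icc (0 : ℝ) 1)
    (ν : Fin m → Measure (Fin p)) [∀ i, IsProbabilityMeasure (ν i)]
    (hνq : ∀ i ℓ, ν i {ℓ} = ENNReal.ofReal (q i ℓ))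
    (P : Set (Fin m → ℝ))
    (hP : P = {x | (∀ i, 0 ≤ x i ∧ x i ≤ 1) ∧ (∑ i, x i = (n : ℝ)) ∧
      ∀ ℓ, L ℓ - δ * n ≤ ∑ i, q i ℓ * x i ∧ ∑ i, q i ℓ * x i ≤ U ℓ + δ * n})
    (x : Fin m → ℝ) (hxP : x ∈ P)
    (hxopt : ∀ y ∈ P, ∑ i, w i * y i ≤ ∑ i, w i * x i)
    (hfrac : {i | 0 < x i ∧ x i < 1}.ncard ≤ p)
    (x' : Fin m → ℝ) (hx' : ∀ i, x' i = (⌈x i⌉ : ℝ))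
    (xstar : Fin m → ℝ) (hxstar01 : ∀ i, xstar i = 0 ∨ xstar i = 1)
    (hxstarsum : ∑ i, xstar i = (n : ℝ)) :
    ((n : ℝ) ≤ ∑ i, x' i ∧ ∑ i, x' i ≤ (n : ℝ) + p) ∧
    ENNReal.ofReal (1 - 4 * p * Real.exp (-(δ ^ 2 * n) / 3)) ≤
      Measure.pi ν {g |
        ((∀ ℓ, L ℓ ≤ (({i | xstar i = 1 ∧ g i = ℓ} : Set (Fin m)).ncard : ℝ) ∧
            (({i | xstar i = 1 ∧ g i = ℓ} : Set (Fin m)).ncard : ℝ) ≤ U ℓ) →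
          ∑ i, w i * xstar i ≤ ∑ i, w i * x' i) ∧
        (∀ ℓ, L ℓ - ((p : ℝ) + 2 * δ * n) ≤
            (({i | x' i = 1 ∧ g i = ℓ} : Set (Fin m)).ncard : ℝ) ∧
          (({i | x' i = 1 ∧ g i = ℓ} : Set (Fin m)).ncard : ℝ) ≤
            U ℓ + ((p : ℝ) + 2 * δ * n))} := by
  change P = denoisedPolytope n δ L U q at hP
  subst hP
  obtain rfl : x' = fun i ↦ (⌈x i⌉ : ℝ) := funext hx'
  have hfrac' : #(fractionalCoords x) ≤ p := by
    rwa [fractionalCoords, ← Set.ncard_coe_finset, coe_filter_univ]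
  refine ⟨sum_ceil_mem_Icc hxP hfrac', ?_⟩
  have hνq' (i : Fin m) (ℓ : Fin p) : (ν i).real {ℓ} = q i ℓ := by
    rw [measureReal_def, hνq, ENNReal.toReal_ofReal (hq i ℓ).1]
  have hbad (s : Finset (Fin m)) (hs : (#s : ℝ) ≤ n) :
      (Measure.pi ν).real {g | ¬ IsConcentrated q (δ * n) s g} ≤
        2 * p * exp (-(δ ^ 2 * n) / 3) := by
    refine (measureReal_not_isConcentrated_le hνq' s (by exact_mod_cast hs) hδ.1.le).trans ?_
    rw [Fintype.card_fin, ← mul_assoc, mul_comm (p : ℝ)]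
    have := mul_nonneg (sq_nonneg δ) n.cast_nonneg
    gcongr
    linarith
  rw [show 4 * (p : ℝ) * exp (-(δ ^ 2 * n) / 3) =
    2 * p * exp (-(δ ^ 2 * n) / 3) + 2 * p * exp (-(δ ^ 2 * n) / 3) by ring]
  refine (ofReal_one_sub_add_le_measure_inter (Set.toFinite _).measurableSet
    (Set.toFinite _).measurableSet
    (hbad (oneCoords xstar) (hxstarsum ▸ (card_oneCoords_eq_sum hxstar01).le))
    (hbad (oneCoords x) (hxP.2.1 ▸ card_oneCoords_le_sum hxP.1))).trans
    (measure_mono fun g ⟨hT, hS⟩ ↦ ⟨fun hfair ↦ ?_, ncard_ceil_mem_Icc hq hxP hfrac' hS⟩)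
  calc ∑ i, w i * xstar i
      ≤ ∑ i, w i * x i :=
        hxopt _ (mem_denoisedPolytope_of_isConcentrated hxstar01 hxstarsum hT hfair)
    _ ≤ ∑ i, w i * ⌈x i⌉ := sum_le_sum fun i _ ↦ mul_le_mul_of_nonneg_left (Int.le_ceil _) (hw i)

/-- **Main guarantee of the approximation algorithm for the Target problem (one protected
attribute).** Rounding up an optimal basic feasible solution `x` of the denoised LP
gives `x'` with `n ≤ ∑ x' ≤ n + p`, and for every fixed Target-feasible candidate `x*`,
with probability at least `1 − 4 p exp (−δ² n / 3)` over the random group assignment `g`: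
(i) if `x*` satisfies the Target fairness constraints for `g`, then `x'` has value at
least that of `x*`; and (ii) `x'` violates each Target fairness constraint by at most
`p + 2 δ n`. -/
theorem stmt8 (m n p : ℕ) (hm : 0 < m) (hn : 0 < n) (hp : 0 < p)
    (δ : ℝ) (hδ : δ ∈ Set.Ioo (0 : ℝ) 1)
    (L U : Fin p → ℝ) (hL : ∀ ℓ, 0 ≤ L ℓ) (hU : ∀ ℓ, 0 ≤ U ℓ)
    (w : Fin m → ℝ) (hw : ∀ i, 0 ≤ w i)
    (q : Fin m → Fin p → ℝ) (hq : ∀ i ℓ, q i ℓ ∈ Set.Icc (0 : ℝ) 1)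
    (hqsum : ∀ i, ∑ ℓ, q i ℓ = 1)
    (ν : Fin m → Measure (Fin p)) [∀ i, IsProbabilityMeasure (ν i)]
    (hνq : ∀ i ℓ, ν i {ℓ} = ENNReal.ofReal (q i ℓ))
    (P : Set (Fin m → ℝ))
    (hP : P = {x | (∀ i, 0 ≤ x i ∧ x i ≤ 1) ∧ (∑ i, x i = (n : ℝ)) ∧
      ∀ ℓ, L ℓ - δ * n ≤ ∑ i, q i ℓ * x i ∧ ∑ i, q i ℓ * x i ≤ U ℓ + δ * n})
    (x : Fin m → ℝ) (hxP : x ∈ P)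
    (hxopt : ∀ y ∈ P, ∑ i, w i * y i ≤ ∑ i, w i * x i)
    (hfrac : {i | 0 < x i ∧ x i < 1}.ncard ≤ p)
    (x' : Fin m → ℝ) (hx' : ∀ i, x' i = (⌈x i⌉ : ℝ))
    (xstar : Fin m → ℝ) (hxstar01 : ∀ i, xstar i = 0 ∨ xstar i = 1)
    (hxstarsum : ∑ i, xstar i = (n : ℝ)) :
    ((n : ℝ) ≤ ∑ i, x' i ∧ ∑ i, x' i ≤ (n : ℝ) + p) ∧
    ENNReal.ofReal (1 - 4 * p * Real.exp (-(δ ^ 2 * n) / 3)) ≤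
      Measure.pi ν {g |
        ((∀ ℓ, L ℓ ≤ (({i | xstar i = 1 ∧ g i = ℓ} : Set (Fin m)).ncard : ℝ) ∧
            (({i | xstar i = 1 ∧ g i = ℓ} : Set (Fin m)).ncard : ℝ) ≤ U ℓ) →
          ∑ i, w i * xstar i ≤ ∑ i, w i * x' i) ∧
        (∀ ℓ, L ℓ - ((p : ℝ) + 2 * δ * n) ≤
            (({i | x' i = 1 ∧ g i = ℓ} : Set (Fin m)).ncard : ℝ) ∧
          (({i | x' i = 1 ∧ g i = ℓ} : Set (Fin m)).ncard : ℝ) ≤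
            U ℓ + ((p : ℝ) + 2 * δ * n))} :=
  stmt8_general m n p δ hδ L U w hw q hq ν hνq P hP x hxP hxopt hfrac x' hx' xstar hxstar01
    hxstarsum
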